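/- arXiv:math/0608130 — 5 statements merged into one kernel-verified Lean document; each statement's English description precedes it below -/
import Mathlib

section
/- Let T be an invertible N×N matrix over a field, partitioned as a 2×2 block matrix [[A, B], [C, D]] with A of size ν₁×μ₁, B of size ν₁×μ₂, C of size ν₂×μ₁, D of size ν₂×μ₂, and let its inverse be partitioned compatibly as [[P, Q], [R, S]] with P of size μ₁×ν₁ and R of size μ₂×ν₁. Then dim ker C = dim ker R (equivalently, ν₂ − rank C = μ₂ − rank R, where nullity is of the linear maps given by C and R). -/
/-!
Multiplication by `A` maps `ker C` isomorphically onto `ker R`, with inverse multiplication by `P`: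
the lower-left blocks of `T⁻¹ T = 1` and `T T⁻¹ = 1` read `R A + S C = 0` and `C P + D R = 0`, so
`A` sends `ker C` into `ker R` and `P` sends `ker R` into `ker C`, while the upper-left blocks
`P A + Q C = 1` and `A P + B R = 1` show that the two maps are mutually inverse on these kernels.
-/

namespace LinearMap

variable {K M N P Q : Type*} [Semiring K] [AddCommMonoid M] [AddCommMonoid N] [AddCommMonoid P]
  [AddCommMonoid Q] [Module K M] [Module K N] [Module K P] [Module K Q]
  {f : M →ₗ[K] N} {g : M →ₗ[K] P}

theorem apply_mem_ker_of_comp_add_comp_eq_zero {u : N →ₗ[K] Q} {v : P →ₗ[K] Q}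
    (h : u ∘ₗ f + v ∘ₗ g = 0) {x : M} (hx : x ∈ ker g) : f x ∈ ker u := by
  simpa [mem_ker.mp hx] using congr($h x)

theorem apply_apply_eq_self_of_comp_add_comp_eq_id {u : N →ₗ[K] M} {v : P →ₗ[K] M}
    (h : u ∘ₗ f + v ∘ₗ g = id) {x : M} (hx : x ∈ ker g) : u (f x) = x := by
  simpa [mem_ker.mp hx] using congr($h x)

variable {M₁ M₂ N₁ N₂ : Type*} [AddCommMonoid M₁] [AddCommMonoid M₂] [AddCommMonoid N₁]
  [AddCommMonoid N₂] [Module K M₁] [Module K M₂] [Module K N₁] [Module K N₂]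

def kerEquivKerOfBlocks {a : M₁ →ₗ[K] N₁} {b : M₂ →ₗ[K] N₁} {c : M₁ →ₗ[K] N₂}
    {d : M₂ →ₗ[K] N₂} {p : N₁ →ₗ[K] M₁} {q : N₂ →ₗ[K] M₁} {r : N₁ →ₗ[K] M₂} {s : N₂ →ₗ[K] M₂}
    (hap : a ∘ₗ p + b ∘ₗ r = id) (hcp : c ∘ₗ p + d ∘ₗ r = 0)
    (hpa : p ∘ₗ a + q ∘ₗ c = id) (hra : r ∘ₗ a + s ∘ₗ c = 0) :
    ker c ≃ₗ[K] ker r where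
  __ := a.restrict fun _ ↦ apply_mem_ker_of_comp_add_comp_eq_zero hra
  invFun := p.restrict fun _ ↦ apply_mem_ker_of_comp_add_comp_eq_zero hcp
  left_inv x := Subtype.ext (apply_apply_eq_self_of_comp_add_comp_eq_id hpa x.2)
  right_inv y := Subtype.ext (apply_apply_eq_self_of_comp_add_comp_eq_id hap y.2)

end LinearMap

open Matrix in
/-- Nullity theorem (Gustafson): for an invertible block 2×2 matrix
`T = [[A,B],[C,D]]` with inverse `[[P,Q],[R,S]]`, the nullity of the
lower-left block `C` equals the nullity of the lower-left block `R`
of the inverse. -/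
theorem nullity_theorem {F : Type*} [Field F] {ν₁ ν₂ μ₁ μ₂ : ℕ}
    (A : Matrix (Fin ν₁) (Fin μ₁) F) (B : Matrix (Fin ν₁) (Fin μ₂) F)
    (C : Matrix (Fin ν₂) (Fin μ₁) F) (D : Matrix (Fin ν₂) (Fin μ₂) F)
    (P : Matrix (Fin μ₁) (Fin ν₁) F) (Q : Matrix (Fin μ₁) (Fin ν₂) F)
    (R : Matrix (Fin μ₂) (Fin ν₁) F) (S : Matrix (Fin μ₂) (Fin ν₂) F)
    (h1 : Matrix.fromBlocks A B C D * Matrix.fromBlocks P Q R S = 1)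
    (h2 : Matrix.fromBlocks P Q R S * Matrix.fromBlocks A B C D = 1) :
    Module.finrank F (LinearMap.ker C.mulVecLin) =
      Module.finrank F (LinearMap.ker R.mulVecLin) := by
  rw [fromBlocks_multiply, ← fromBlocks_one, fromBlocks_inj] at h1 h2
  obtain ⟨hAP, -, hCP, -⟩ := h1
  obtain ⟨hPA, -, hRA, -⟩ := h2
  replace hAP := congr(mulVecLin $hAP)
  replace hCP := congr(mulVecLin $hCP)
  replace hPA := congr(mulVecLin $hPA)
  replace hRA := congr(mulVecLin $hRA)
  simp only [mulVecLin_add, mulVecLin_mul, mulVecLin_one, mulVecLin_zero] at hAP hCP hPA hRA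
  exact (LinearMap.kerEquivKerOfBlocks hAP hCP hPA hRA).finrank_eq
end

section
/- Let T be an invertible N×N matrix partitioned as [[A, B], [C, D]] with inverse [[P, Q], [R, S]] partitioned compatibly. Then the image of ker C under A equals ker R, i.e., A[ker C] = ker R. -/
namespace LinearMap

variable {K M₁ M₂ N₁ N₂ : Type*} [Semiring K]
  [AddCommMonoid M₁] [AddCommMonoid M₂] [AddCommMonoid N₁] [AddCommMonoid N₂]
  [Module K M₁] [Module K M₂] [Module K N₁] [Module K N₂]

theorem map_ker_le_ker_of_comp_add_comp_eq_zero {a : M₁ →ₗ[K] N₁} {c : M₁ →ₗ[K] N₂}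
    {r : N₁ →ₗ[K] M₂} {s : N₂ →ₗ[K] M₂} (hrs : r ∘ₗ a + s ∘ₗ c = 0) :
    (ker c).map a ≤ ker r := by
  rintro _ ⟨x, hx, rfl⟩
  have hsum : r (a x) + s (c x) = 0 := congr($hrs x)
  rwa [mem_ker.mp hx, map_zero, add_zero] at hsum

theorem ker_le_map_ker_of_block_right_inverse {a : M₁ →ₗ[K] N₁} {b : M₂ →ₗ[K] N₁}
    {c : M₁ →ₗ[K] N₂} {d : M₂ →ₗ[K] N₂} {p : N₁ →ₗ[K] M₁} {r : N₁ →ₗ[K] M₂}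
    (hap : a ∘ₗ p + b ∘ₗ r = id) (hcp : c ∘ₗ p + d ∘ₗ r = 0) :
    ker r ≤ (ker c).map a := by
  intro y hy
  have hry : r y = 0 := mem_ker.mp hy
  have hay : a (p y) + b (r y) = y := congr($hap y)
  have hcy : c (p y) + d (r y) = 0 := congr($hcp y)
  rw [hry, map_zero, add_zero] at hay hcy
  exact ⟨p y, hcy, hay⟩

end LinearMap

namespace Matrix

variable {α l m n o l' m' : Type*} [Fintype l] [Fintype m] [Fintype n] [Fintype o]
  [DecidableEq l'] [DecidableEq m'] [Semiring α]

theorem fromBlocks_mul_fromBlocks_eq_one_iff {A : Matrix l' l α} {B : Matrix l' m α}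
    {C : Matrix m' l α} {D : Matrix m' m α} {P : Matrix l l' α} {Q : Matrix l m' α}
    {R : Matrix m l' α} {S : Matrix m m' α} :
    fromBlocks A B C D * fromBlocks P Q R S = 1 ↔
      A * P + B * R = 1 ∧ A * Q + B * S = 0 ∧ C * P + D * R = 0 ∧ C * Q + D * S = 1 := by
  rw [fromBlocks_multiply, ← fromBlocks_one, fromBlocks_inj]

end Matrix

open Matrix LinearMap in
/-- For an invertible block 2×2 matrix `[[A,B],[C,D]]` with inverse
`[[P,Q],[R,S]]`, the image of `ker C` under `A` equals `ker R`. -/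
theorem image_ker_eq_ker {F : Type*} [Field F] {ν₁ ν₂ μ₁ μ₂ : ℕ}
    (A : Matrix (Fin ν₁) (Fin μ₁) F) (B : Matrix (Fin ν₁) (Fin μ₂) F)
    (C : Matrix (Fin ν₂) (Fin μ₁) F) (D : Matrix (Fin ν₂) (Fin μ₂) F)
    (P : Matrix (Fin μ₁) (Fin ν₁) F) (Q : Matrix (Fin μ₁) (Fin ν₂) F)
    (R : Matrix (Fin μ₂) (Fin ν₁) F) (S : Matrix (Fin μ₂) (Fin ν₂) F)
    (h1 : Matrix.fromBlocks A B C D * Matrix.fromBlocks P Q R S = 1)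
    (h2 : Matrix.fromBlocks P Q R S * Matrix.fromBlocks A B C D = 1) :
    Submodule.map A.mulVecLin (LinearMap.ker C.mulVecLin) =
      LinearMap.ker R.mulVecLin := by
  obtain ⟨hAP, -, hCP, -⟩ := fromBlocks_mul_fromBlocks_eq_one_iff.mp h1
  obtain ⟨-, -, hRA, -⟩ := fromBlocks_mul_fromBlocks_eq_one_iff.mp h2
  apply le_antisymm
  · apply map_ker_le_ker_of_comp_add_comp_eq_zero (s := S.mulVecLin)
    rw [← mulVecLin_mul, ← mulVecLin_mul, ← mulVecLin_add, hRA, mulVecLin_zero]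
  · apply ker_le_map_ker_of_block_right_inverse (b := B.mulVecLin) (d := D.mulVecLin)
    · rw [← mulVecLin_mul, ← mulVecLin_mul, ← mulVecLin_add, hAP, mulVecLin_one]
    · rw [← mulVecLin_mul, ← mulVecLin_mul, ← mulVecLin_add, hCP, mulVecLin_zero]
end

section
/- Let T₁₁, T₂₁, T₂₂ be matrices over a field of sizes ν₁×μ₁, ν₂×μ₁, ν₂×μ₂ respectively. Then the minimal rank over all matrices X of size ν₁×μ₂ of the block matrix [[T₁₁, X], [T₂₁, T₂₂]] equals rank[T₁₁; T₂₁] + rank[T₂₁ T₂₂] − rank T₂₁. -/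
/-!
Write `M(X) = [[A, X], [C, D]]`. Since `[A; C] = M(X) [1; 0]`, `[C D] = [0 1] M(X)` and
`C = [0 1] M(X) [1; 0]`, Frobenius' rank inequality `rank AB + rank BC ≤ rank B + rank ABC` gives
`rank [A; C] + rank [C D] ≤ rank M(X) + rank C` for every `X`.

For the converse, take a generalized inverse `G` of `C` (`C G C = C`), put `D' = D - C G D` and
`X = A G D`. Subtracting `G D` times the first block column from the second turns `M(X)` into
`[[A, 0], [C, D']]`, of rank at most `rank [A; C] + rank D'`, and `[C D]` into `[C D']`.
As `1 - C G` kills `C` and fixes `D'`, Frobenius' inequality again gives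
`rank C + rank D' ≤ rank [C D']`.
-/

open Matrix Module

section FiniteDimensional

variable {K V W : Type*} [Field K] [AddCommGroup V] [Module K V] [FiniteDimensional K V]
  [AddCommGroup W] [Module K W]

theorem Submodule.finrank_map_add_finrank_inf_ker (f : V →ₗ[K] W) (S : Submodule K V) :
    finrank K (S.map f) + finrank K (S ⊓ LinearMap.ker f : Submodule K V) = finrank K S := by
  rw [← (f.domRestrict S).finrank_range_add_finrank_ker, LinearMap.range_domRestrict,
    LinearMap.ker_domRestrict, ← Submodule.finrank_map_subtype_eq, Submodule.map_comap_subtype]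

theorem Submodule.finrank_add_finrank_map_le_of_le (f : V →ₗ[K] W) {S T : Submodule K V}
    (hST : S ≤ T) : finrank K S + finrank K (T.map f) ≤ finrank K T + finrank K (S.map f) := by
  have hS := S.finrank_map_add_finrank_inf_ker f
  have hT := T.finrank_map_add_finrank_inf_ker f
  have hker := Submodule.finrank_mono (inf_le_inf_right (LinearMap.ker f) hST)
  omega

theorem LinearMap.exists_comp_comp_eq_self (f : V →ₗ[K] W) : ∃ g : W →ₗ[K] V, f ∘ₗ g ∘ₗ f = f := by
  obtain ⟨s, hs⟩ := f.rangeRestrict.exists_rightInverse_of_surjective f.range_rangeRestrict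
  obtain ⟨p, hp⟩ := (LinearMap.range f).subtype.exists_leftInverse_of_injective
    (LinearMap.range f).ker_subtype
  refine ⟨s ∘ₗ p, LinearMap.ext fun x => ?_⟩
  have hpx : p (f x) = f.rangeRestrict x := congr($hp (f.rangeRestrict x))
  have hsx : f.rangeRestrict (s (f.rangeRestrict x)) = f.rangeRestrict x :=
    congr($hs (f.rangeRestrict x))
  simpa [hpx] using congr(Subtype.val $hsx)

end FiniteDimensional

namespace Matrix

variable {K : Type*} [Field K] {l m n o : Type*} [Fintype n]

theorem rank_add_le (A B : Matrix m n K) : (A + B).rank ≤ A.rank + B.rank := by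
  rw [Matrix.rank, Matrix.rank, Matrix.rank, mulVecLin_add]
  exact (Submodule.finrank_mono (LinearMap.range_add_le _ _)).trans
    (Submodule.finrank_add_le_finrank_add_finrank _ _)

theorem rank_mul_add_rank_mul_le [Fintype m] [Fintype o] (A : Matrix l m K) (B : Matrix m n K)
    (C : Matrix n o K) :
    (A * B).rank + (B * C).rank ≤ B.rank + (A * B * C).rank := by
  have h := Submodule.finrank_add_finrank_map_le_of_le A.mulVecLin
    (LinearMap.range_comp_le_range C.mulVecLin B.mulVecLin)
  rw [← LinearMap.range_comp, ← LinearMap.range_comp, ← mulVecLin_mul,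
    ← mulVecLin_mul, ← mulVecLin_mul] at h
  rw [Matrix.mul_assoc, Matrix.rank, Matrix.rank, Matrix.rank, Matrix.rank]
  omega

theorem exists_mul_mul_eq_self [Fintype m] (C : Matrix m n K) :
    ∃ G : Matrix n m K, C * G * C = C := by
  classical
  obtain ⟨g, hg⟩ := (toLin' C).exists_comp_comp_eq_self
  refine ⟨LinearMap.toMatrix' g, toLin'.injective ?_⟩
  simpa [toLin'_mul, LinearMap.comp_assoc] using hg

section Blocks

variable {m₁ m₂ n₁ n₂ : Type*} [Fintype m₂] [Fintype n₁] [Fintype n₂]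
  [DecidableEq m₂] [DecidableEq n₁]

theorem rank_fromRows_add_rank_fromCols_le [Fintype m₁] (A : Matrix m₁ n₁ K) (B : Matrix m₁ n₂ K)
    (C : Matrix m₂ n₁ K) (D : Matrix m₂ n₂ K) :
    (fromRows A C).rank + (fromCols C D).rank ≤ (fromBlocks A B C D).rank + C.rank := by
  have hCols : fromCols (0 : Matrix m₂ m₁ K) (1 : Matrix m₂ m₂ K) * fromBlocks A B C D
      = fromCols C D := by
    simp [fromCols_mul_fromBlocks]
  have hRows : fromBlocks A B C D * fromRows (1 : Matrix n₁ n₁ K) (0 : Matrix n₂ n₁ K)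
      = fromRows A C := by
    simp [fromBlocks_mul_fromRows]
  have hC : fromCols C D * fromRows (1 : Matrix n₁ n₁ K) (0 : Matrix n₂ n₁ K) = C := by
    simp [fromCols_mul_fromRows]
  have hfrob := rank_mul_add_rank_mul_le (fromCols (0 : Matrix m₂ m₁ K) (1 : Matrix m₂ m₂ K))
    (fromBlocks A B C D) (fromRows (1 : Matrix n₁ n₁ K) (0 : Matrix n₂ n₁ K))
  rw [hCols, hRows, hC] at hfrob
  omega

variable [DecidableEq n₂]

theorem rank_fromBlocks_zero₁₂_le (A : Matrix m₁ n₁ K) (C : Matrix m₂ n₁ K) (D : Matrix m₂ n₂ K) :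
    (fromBlocks A 0 C D).rank ≤ (fromRows A C).rank + D.rank := by
  have hsplit : fromBlocks A 0 C D
      = fromRows A C * fromCols (1 : Matrix n₁ n₁ K) (0 : Matrix n₁ n₂ K)
        + fromRows (0 : Matrix m₁ m₂ K) (1 : Matrix m₂ m₂ K) * D
          * fromCols (0 : Matrix n₂ n₁ K) (1 : Matrix n₂ n₂ K) := by
    simp only [fromRows_mul, mul_fromCols, Matrix.mul_one, Matrix.mul_zero, Matrix.zero_mul,
      Matrix.one_mul]
    ext (i | i) (j | j) <;> simp
  rw [hsplit]
  exact (rank_add_le _ _).trans (add_le_add (rank_mul_le_left _ _)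
    ((rank_mul_le_left _ _).trans (rank_mul_le_right _ _)))

theorem rank_add_rank_le_rank_fromCols_of_mul_mul_eq {C : Matrix m₂ n₁ K} {D : Matrix m₂ n₂ K}
    {G : Matrix n₁ m₂ K} (hG : C * G * C = C) (hD : C * G * D = 0) :
    C.rank + D.rank ≤ (fromCols C D).rank := by
  have hleft : fromCols C D * fromRows (1 : Matrix n₁ n₁ K) (0 : Matrix n₂ n₁ K) = C := by
    simp [fromCols_mul_fromRows]
  have hproj : (1 - C * G) * fromCols C D = fromCols 0 D := by
    rw [mul_fromCols, Matrix.sub_mul, Matrix.sub_mul, hG, hD]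
    simp
  have hright : fromCols (0 : Matrix m₂ n₁ K) D * fromRows (0 : Matrix n₁ n₂ K) (1 : Matrix n₂ n₂ K)
      = D := by
    simp [fromCols_mul_fromRows]
  have hkill : (1 - C * G) * C = 0 := by
    rw [Matrix.sub_mul, hG, Matrix.one_mul, sub_self]
  have hfrob := rank_mul_add_rank_mul_le (1 - C * G) (fromCols C D)
    (fromRows (1 : Matrix n₁ n₁ K) (0 : Matrix n₂ n₁ K))
  rw [Matrix.mul_assoc, hleft, hproj, hkill, rank_zero, add_zero] at hfrob
  have hD_le := rank_mul_le_left (fromCols (0 : Matrix m₂ n₁ K) D)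
    (fromRows (0 : Matrix n₁ n₂ K) (1 : Matrix n₂ n₂ K))
  rw [hright] at hD_le
  omega

theorem rank_fromBlocks_add_rank_le_of_mul_mul_eq (A : Matrix m₁ n₁ K) {C : Matrix m₂ n₁ K}
    (D : Matrix m₂ n₂ K) {G : Matrix n₁ m₂ K} (hG : C * G * C = C) :
    (fromBlocks A (A * G * D) C D).rank + C.rank ≤ (fromRows A C).rank + (fromCols C D).rank := by
  set D' := D - C * G * D
  set E : Matrix (n₁ ⊕ n₂) (n₁ ⊕ n₂) K := fromBlocks 1 (G * D) 0 1
  have hE : IsUnit E.det := by simp [E]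
  have hM : fromBlocks A 0 C D' * E = fromBlocks A (A * G * D) C D := by
    simp [E, D', fromBlocks_multiply, Matrix.mul_assoc]
  have hCD : fromCols C D' * E = fromCols C D := by
    simp [E, D', fromCols_mul_fromBlocks, Matrix.mul_assoc]
  have hD' : C * G * D' = 0 := by
    rw [Matrix.mul_sub, show C * G * (C * G * D) = C * G * C * G * D by
      simp only [Matrix.mul_assoc], hG, sub_self]
  have hupper := rank_fromBlocks_zero₁₂_le A C D'
  have hlower := rank_add_rank_le_rank_fromCols_of_mul_mul_eq hG hD'
  rw [← hM, ← hCD, rank_mul_eq_left_of_isUnit_det _ _ hE, rank_mul_eq_left_of_isUnit_det _ _ hE]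
  omega

end Blocks

end Matrix

/-- Minimal rank of the 2×2 lower-triangular partial block matrix
`[[T₁₁, ?],[T₂₁, T₂₂]]` equals
`rank [T₁₁; T₂₁] + rank [T₂₁ T₂₂] − rank T₂₁`. -/
theorem minRank_two_by_two {F : Type*} [Field F] {ν₁ ν₂ μ₁ μ₂ : ℕ}
    (T₁₁ : Matrix (Fin ν₁) (Fin μ₁) F) (T₂₁ : Matrix (Fin ν₂) (Fin μ₁) F)
    (T₂₂ : Matrix (Fin ν₂) (Fin μ₂) F) :
    sInf {r : ℕ | ∃ X : Matrix (Fin ν₁) (Fin μ₂) F,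
        (Matrix.fromBlocks T₁₁ X T₂₁ T₂₂).rank = r} =
      (Matrix.fromRows T₁₁ T₂₁).rank + (Matrix.fromCols T₂₁ T₂₂).rank
        - T₂₁.rank := by
  obtain ⟨G, hG⟩ := T₂₁.exists_mul_mul_eq_self
  have hlower := fun X => rank_fromRows_add_rank_fromCols_le T₁₁ X T₂₁ T₂₂
  have hattained : (fromRows T₁₁ T₂₁).rank + (fromCols T₂₁ T₂₂).rank - T₂₁.rank
      ∈ {r : ℕ | ∃ X : Matrix (Fin ν₁) (Fin μ₂) F, (fromBlocks T₁₁ X T₂₁ T₂₂).rank = r} := by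
    refine ⟨T₁₁ * G * T₂₂, ?_⟩
    have hupper := rank_fromBlocks_add_rank_le_of_mul_mul_eq T₁₁ T₂₂ hG
    have := hlower (T₁₁ * G * T₂₂)
    omega
  refine le_antisymm (Nat.sInf_le hattained) (le_csInf ⟨_, hattained⟩ ?_)
  rintro _ ⟨X, rfl⟩
  have := hlower X
  omega
end

section
/- Let T₁₁, T₂₁, T₂₂ be matrices over a field of sizes ν₁×μ₁, ν₂×μ₁, ν₂×μ₂. For every matrix X of size ν₁×μ₂, rank[[T₁₁, X],[T₂₁, T₂₂]] ≥ rank[T₁₁; T₂₁] + rank[T₂₁ T₂₂] − rank T₂₁. -/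
/-!
Cutting `M = [[T₁₁, X], [T₂₁, T₂₂]]` by the selection matrices `A = [0 1]` on the left and
`C = [1; 0]` on the right gives `A M = [T₂₁ T₂₂]`, `M C = [T₁₁; T₂₁]` and `A M C = T₂₁`, none of
which involves `X`. Frobenius' inequality `rank (A M) + rank (M C) ≤ rank (A M C) + rank M` is
then exactly the claimed bound.
-/

open Module

theorem Submodule.finrank_map_add_finrank_ker_inf {K V W : Type*} [DivisionRing K]
    [AddCommGroup V] [Module K V] [AddCommGroup W] [Module K W] [FiniteDimensional K V]
    (f : V →ₗ[K] W) (S : Submodule K V) :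
    finrank K (S.map f) + finrank K (LinearMap.ker f ⊓ S : Submodule K V) = finrank K S := by
  have h := LinearMap.finrank_range_add_finrank_ker (f.domRestrict S)
  rwa [LinearMap.range_domRestrict, LinearMap.ker_domRestrict,
    ← Submodule.finrank_map_subtype_eq, Submodule.map_comap_subtype, inf_comm] at h

/-- Frobenius' inequality: `rank g - rank (f g) = dim (ker f ⊓ range g)` dominates
`rank (g h) - rank (f g h) = dim (ker f ⊓ range (g h))` because `range (g h) ≤ range g`. -/
theorem LinearMap.finrank_range_comp_add_le {K U V W Y : Type*} [DivisionRing K]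
    [AddCommGroup U] [Module K U] [AddCommGroup V] [Module K V] [AddCommGroup W] [Module K W]
    [AddCommGroup Y] [Module K Y] [FiniteDimensional K V]
    (f : V →ₗ[K] W) (g : U →ₗ[K] V) (h : Y →ₗ[K] U) :
    finrank K (range (f ∘ₗ g)) + finrank K (range (g ∘ₗ h))
      ≤ finrank K (range (f ∘ₗ g ∘ₗ h)) + finrank K (range g) := by
  have hgh := Submodule.finrank_map_add_finrank_ker_inf f (range (g ∘ₗ h))
  have hg := Submodule.finrank_map_add_finrank_ker_inf f (range g)
  have hmono : finrank K (ker f ⊓ range (g ∘ₗ h) : Submodule K V)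
      ≤ finrank K (ker f ⊓ range g : Submodule K V) :=
    Submodule.finrank_mono (inf_le_inf_left _ (range_comp_le_range h g))
  rw [range_comp g f, range_comp (g ∘ₗ h) f]
  omega

theorem Matrix.rank_mul_add_rank_mul_le_s3 {K l m n p : Type*} [Field K]
    [Fintype m] [Fintype n] [Fintype p]
    (A : Matrix l m K) (B : Matrix m n K) (C : Matrix n p K) :
    (A * B).rank + (B * C).rank ≤ (A * B * C).rank + B.rank := by
  have := LinearMap.finrank_range_comp_add_le A.mulVecLin B.mulVecLin C.mulVecLin
  rwa [← Matrix.mulVecLin_mul, ← Matrix.mulVecLin_mul, ← Matrix.mulVecLin_mul,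
    ← Matrix.mul_assoc] at this

/-- Lower bound half of the 2×2 minimal rank completion formula. -/
theorem rank_completion_lower_bound {F : Type*} [Field F] {ν₁ ν₂ μ₁ μ₂ : ℕ}
    (T₁₁ : Matrix (Fin ν₁) (Fin μ₁) F) (T₂₁ : Matrix (Fin ν₂) (Fin μ₁) F)
    (T₂₂ : Matrix (Fin ν₂) (Fin μ₂) F) (X : Matrix (Fin ν₁) (Fin μ₂) F) :
    (Matrix.fromRows T₁₁ T₂₁).rank + (Matrix.fromCols T₂₁ T₂₂).rank
        - T₂₁.rank ≤ (Matrix.fromBlocks T₁₁ X T₂₁ T₂₂).rank := by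
  set M := Matrix.fromBlocks T₁₁ X T₂₁ T₂₂
  let A : Matrix (Fin ν₂) (Fin ν₁ ⊕ Fin ν₂) F := Matrix.fromCols 0 1
  let C : Matrix (Fin μ₁ ⊕ Fin μ₂) (Fin μ₁) F := Matrix.fromRows 1 0
  have hAM : A * M = Matrix.fromCols T₂₁ T₂₂ := by simp [A, M, Matrix.fromCols_mul_fromBlocks]
  have hMC : M * C = Matrix.fromRows T₁₁ T₂₁ := by simp [C, M, Matrix.fromBlocks_mul_fromRows]
  have hAMC : A * M * C = T₂₁ := by simp [hAM, C, Matrix.fromCols_mul_fromRows]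
  have frobenius := Matrix.rank_mul_add_rank_mul_le_s3 A M C
  rw [hAMC, hAM, hMC] at frobenius
  omega
end

section
/- Let T = {t_{ij} : 1 ≤ j ≤ i ≤ n} be a scalar lower-triangular partial matrix over a field. The minimal rank of T (minimum of rank B over all n×n matrices B with b_{ij} = t_{ij} for j ≤ i) equals n if and only if t_{ii} ≠ 0 for all i and t_{ij} = 0 for all i > j. -/
/-!
If every strictly lower entry vanishes, each completion is upper triangular, so its determinant
is the product of the diagonal entries whatever the free entries are. Otherwise take the last row
`i` having a nonzero entry `t i j` with `j < i`. Below row `i` the columns `i` and `j` vanish, and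
in row `i` they are proportional with ratio `t i i / t i j`; filling the free part of column `i`
with the same multiple of column `j` yields a singular completion.
-/

open Matrix

namespace Matrix

variable {ι F : Type*} [Fintype ι] [DecidableEq ι] [Field F]

theorem rank_eq_card_iff_det_ne_zero {A : Matrix ι ι F} :
    A.rank = Fintype.card ι ↔ A.det ≠ 0 := by
  refine ⟨fun h => ?_, rank_of_det_ne_zero⟩
  have hsurj : Function.Surjective A.mulVec := LinearMap.range_eq_top.1 <|
    Submodule.eq_top_of_finrank_eq (h.trans (Module.finrank_fintype_fun_eq_card F).symm)
  exact ((isUnit_iff_isUnit_det A).1 (mulVec_surjective_iff_isUnit.1 hsurj)).ne_zero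

theorem det_eq_zero_of_col_eq_smul_col {A : Matrix ι ι F} {i j : ι} (hij : i ≠ j) (a : F)
    (h : ∀ p, A p i = a * A p j) : A.det = 0 := by
  refine exists_mulVec_eq_zero_iff.1 ⟨Pi.single i 1 - Pi.single j a, fun h0 => ?_, ?_⟩
  · simpa [hij] using congrFun h0 i
  · ext p
    simp [mulVec_sub, mulVec_single, h]

end Matrix

section LowerCompletion

variable {ι F : Type*} [LinearOrder ι] [Field F]

def IsLowerCompletion (t B : Matrix ι ι F) : Prop :=
  ∀ i j, j ≤ i → B i j = t i j

def lowerTriangularPart (t : Matrix ι ι F) : Matrix ι ι F :=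
  fun i j => if j ≤ i then t i j else 0

noncomputable def minRank [Fintype ι] (t : Matrix ι ι F) : ℕ :=
  sInf {r | ∃ B, IsLowerCompletion t B ∧ B.rank = r}

theorem isLowerCompletion_lowerTriangularPart (t : Matrix ι ι F) :
    IsLowerCompletion t (lowerTriangularPart t) :=
  fun _ _ h => if_pos h

theorem IsLowerCompletion.det_eq_prod_diag [Fintype ι] {t B : Matrix ι ι F}
    (hB : IsLowerCompletion t B) (ht : ∀ i j, j < i → t i j = 0) : B.det = ∏ i, t i i := by
  rw [det_of_isUpperTriangular fun i j hji => (hB i j hji.le).trans (ht i j hji)]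
  exact Finset.prod_congr rfl fun i _ => hB i i le_rfl

theorem exists_isLowerCompletion_det_eq_zero_of_last_row [Fintype ι] {t : Matrix ι ι F}
    {i j : ι} (hji : j < i) (hij : t i j ≠ 0) (hbelow : ∀ p, i < p → ∀ q < p, t p q = 0) :
    ∃ B, IsLowerCompletion t B ∧ B.det = 0 := by
  set L := lowerTriangularPart t
  set a := t i i / t i j
  refine ⟨L.updateCol i fun p => a * L p j, fun p q hqp => ?_,
    det_eq_zero_of_col_eq_smul_col hji.ne' a fun p => ?_⟩
  · rcases eq_or_ne q i with rfl | hq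
    · rcases hqp.eq_or_lt with rfl | hlt
      · simp [L, a, lowerTriangularPart, hji.le, hij]
      · simp [L, lowerTriangularPart, hbelow p hlt j (hji.trans hlt), hbelow p hlt q hlt]
    · simp [updateCol_ne hq, L, lowerTriangularPart, hqp]
  · simp [updateCol_ne hji.ne]

theorem exists_isLowerCompletion_det_eq_zero [Fintype ι] {t : Matrix ι ι F}
    (h : ∃ i j, j < i ∧ t i j ≠ 0) : ∃ B, IsLowerCompletion t B ∧ B.det = 0 := by
  classical
  obtain ⟨i₀, hi₀⟩ := h
  obtain ⟨i, hi, hmax⟩ := Finset.exists_max_image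
    (Finset.univ.filter fun i => ∃ j, j < i ∧ t i j ≠ 0) id ⟨i₀, by simpa using hi₀⟩
  obtain ⟨j, hji, hij⟩ := (Finset.mem_filter.1 hi).2
  refine exists_isLowerCompletion_det_eq_zero_of_last_row hji hij fun p hip q hqp => ?_
  by_contra hpq
  exact (hmax p (by simpa using ⟨q, hqp, hpq⟩)).not_gt hip

theorem forall_isLowerCompletion_det_ne_zero_iff [Fintype ι] {t : Matrix ι ι F} :
    (∀ B, IsLowerCompletion t B → B.det ≠ 0) ↔
      (∀ i, t i i ≠ 0) ∧ ∀ i j, j < i → t i j = 0 := by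
  refine ⟨fun h => ?_, fun ⟨hdiag, hlower⟩ B hB => ?_⟩
  · have hlower : ∀ i j, j < i → t i j = 0 := by
      by_contra! hne
      obtain ⟨B, hB, hdet⟩ := exists_isLowerCompletion_det_eq_zero hne
      exact h B hB hdet
    have hprod := h _ (isLowerCompletion_lowerTriangularPart t)
    rw [(isLowerCompletion_lowerTriangularPart t).det_eq_prod_diag hlower] at hprod
    exact ⟨fun i => Finset.prod_ne_zero_iff.1 hprod i (Finset.mem_univ i), hlower⟩
  · rw [hB.det_eq_prod_diag hlower]
    exact Finset.prod_ne_zero_iff.2 fun i _ => hdiag i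

theorem minRank_eq_card_iff [Fintype ι] (t : Matrix ι ι F) :
    minRank t = Fintype.card ι ↔ ∀ B, IsLowerCompletion t B → B.det ≠ 0 := by
  have hne : {r | ∃ B, IsLowerCompletion t B ∧ B.rank = r}.Nonempty :=
    ⟨_, _, isLowerCompletion_lowerTriangularPart t, rfl⟩
  simp_rw [← rank_eq_card_iff_det_ne_zero]
  refine ⟨fun h B hB => le_antisymm B.rank_le_card_width ?_, fun h => ?_⟩
  · exact h ▸ Nat.sInf_le ⟨B, hB, rfl⟩
  · obtain ⟨B, hB, hrank⟩ := Nat.sInf_mem hne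
    exact hrank.symm.trans (h B hB)

end LowerCompletion

/-- The minimal rank of a scalar lower-triangular partial matrix
`{t_{ij} : j ≤ i}` equals `n` iff the diagonal entries are nonzero and the
strictly lower triangular entries are zero. -/
theorem minRank_eq_n_iff {F : Type*} [Field F] {n : ℕ}
    (t : Matrix (Fin n) (Fin n) F) :
    sInf {r : ℕ | ∃ B : Matrix (Fin n) (Fin n) F,
        (∀ i j : Fin n, j ≤ i → B i j = t i j) ∧ B.rank = r} = n ↔
      (∀ i : Fin n, t i i ≠ 0) ∧ (∀ i j : Fin n, j < i → t i j = 0) := by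
  have h := minRank_eq_card_iff t
  rw [Fintype.card_fin] at h
  exact h.trans forall_isLowerCompletion_det_ne_zero_iff
end
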